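/- arXiv:1605.03058 — 2 statements merged into one kernel-verified Lean document; each statement's English description precedes it below -/
import Mathlib

section
/- (Theorem 4.1) Let Ω ⊂ ℝ² be open, T > 0, and let L, M, N, g₁₁, g₁₂, g₂₂ : Ω × [0,T) → ℝ be twice continuously differentiable with det g := g₁₁g₂₂ − g₁₂² > 0 and M < 0 everywhere. Define U := √(½(−(L−N) + √((L−N)² + 4M²))) and V := √(½((L−N) + √((L−N)² + 4M²))). Suppose that: (a) at t = 0 the constraint equations hold: ∂₁U + ∂₂V = 0 and ∂₁(Γ¹₂₂L − 2Γ¹₁₂M + Γ¹₁₁N) + ∂₂(Γ²₂₂L − 2Γ²₁₂M + Γ²₁₁N) = 0, and the Gauss–Codazzi equations hold; (b) for all t ∈ [0,T): the Gauss–Codazzi equations hold, the evolution equations ∂_t U = Γ¹₂₂L − 2Γ¹₁₂M + Γ¹₁₁N and ∂_t V = Γ²₂₂L − 2Γ²₁₂M + Γ²₁₁N hold, and ∂₁(Γ¹₂₂L − 2Γ¹₁₂M + Γ¹₁₁N) + ∂₂(Γ²₂₂L − 2Γ²₁₂M + Γ²₁₁N) = 0. Then the functions u := U, v := V, and p :=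 L − V² (which equals N − U²) satisfy the incompressible Euler equations ∂₁(u² + p) + ∂₂(uv) = −∂_t u, ∂₁(uv) + ∂₂(v² + p) = −∂_t v, ∂₁u + ∂₂v = 0 on Ω × [0,T), and moreover L = v² + p, M = −uv, N = u² + p. -/
noncomputable def pdx1 (f : ℝ × ℝ × ℝ → ℝ) (q : ℝ × ℝ × ℝ) : ℝ :=
  deriv (fun s => f (s, q.2.1, q.2.2)) q.1

noncomputable def pdx2 (f : ℝ × ℝ × ℝ → ℝ) (q : ℝ × ℝ × ℝ) : ℝ :=
  deriv (fun s => f (q.1, s, q.2.2)) q.2.1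

noncomputable def pdt (f : ℝ × ℝ × ℝ → ℝ) (q : ℝ × ℝ × ℝ) : ℝ :=
  deriv (fun s => f (q.1, q.2.1, s)) q.2.2

/-- Determinant of the metric `g₁₁g₂₂ - g₁₂²`. -/
noncomputable def detg (g11 g12 g22 : ℝ × ℝ × ℝ → ℝ) (q : ℝ × ℝ × ℝ) : ℝ :=
  g11 q * g22 q - (g12 q) ^ 2

/-- Christoffel symbol Γ¹₁₁. -/
noncomputable def Gamma1_11 (g11 g12 g22 : ℝ × ℝ × ℝ → ℝ) (q : ℝ × ℝ × ℝ) : ℝ :=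
  (g22 q * pdx1 g11 q - g12 q * (2 * pdx1 g12 q - pdx2 g11 q)) / (2 * detg g11 g12 g22 q)

/-- Christoffel symbol Γ¹₁₂. -/
noncomputable def Gamma1_12 (g11 g12 g22 : ℝ × ℝ × ℝ → ℝ) (q : ℝ × ℝ × ℝ) : ℝ :=
  (g22 q * pdx2 g11 q - g12 q * pdx1 g22 q) / (2 * detg g11 g12 g22 q)

/-- Christoffel symbol Γ¹₂₂. -/
noncomputable def Gamma1_22 (g11 g12 g22 : ℝ × ℝ × ℝ → ℝ) (q : ℝ × ℝ × ℝ) : ℝ :=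
  (g22 q * (2 * pdx2 g12 q - pdx1 g22 q) - g12 q * pdx2 g22 q) / (2 * detg g11 g12 g22 q)

/-- Christoffel symbol Γ²₁₁. -/
noncomputable def Gamma2_11 (g11 g12 g22 : ℝ × ℝ × ℝ → ℝ) (q : ℝ × ℝ × ℝ) : ℝ :=
  (-(g12 q) * pdx1 g11 q + g11 q * (2 * pdx1 g12 q - pdx2 g11 q)) / (2 * detg g11 g12 g22 q)

/-- Christoffel symbol Γ²₁₂. -/
noncomputable def Gamma2_12 (g11 g12 g22 : ℝ × ℝ × ℝ → ℝ) (q : ℝ × ℝ × ℝ) : ℝ :=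
  (-(g12 q) * pdx2 g11 q + g11 q * pdx1 g22 q) / (2 * detg g11 g12 g22 q)

/-- Christoffel symbol Γ²₂₂. -/
noncomputable def Gamma2_22 (g11 g12 g22 : ℝ × ℝ × ℝ → ℝ) (q : ℝ × ℝ × ℝ) : ℝ :=
  (-(g12 q) * (2 * pdx2 g12 q - pdx1 g22 q) + g11 q * pdx2 g22 q) / (2 * detg g11 g12 g22 q)

/-- Gauss curvature of `g` via the Brioschi formula (spatial derivatives). -/
noncomputable def brioschi (g11 g12 g22 : ℝ × ℝ × ℝ → ℝ) (q : ℝ × ℝ × ℝ) : ℝ :=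
  (1 / (2 * (detg g11 g12 g22 q) ^ 2)) *
    Matrix.det !![-(pdx2 (pdx2 g11) q) + 2 * pdx1 (pdx2 g12) q - pdx1 (pdx1 g22) q,
                    pdx1 g11 q, 2 * pdx1 g12 q - pdx2 g11 q;
                  2 * pdx2 g12 q - pdx1 g22 q, 2 * g11 q, 2 * g12 q;
                  pdx2 g22 q, 2 * g12 q, 2 * g22 q]
  - (1 / (2 * (detg g11 g12 g22 q) ^ 2)) *
    Matrix.det !![0, pdx2 g11 q, pdx1 g22 q;
                  pdx2 g11 q, 2 * g11 q, 2 * g12 q;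
                  pdx1 g22 q, 2 * g12 q, 2 * g22 q]

/-- The Gauss–Codazzi equations for `(L, M, N)` and the metric `g` at the point `q`. -/
def GaussCodazzi (L M N g11 g12 g22 : ℝ × ℝ × ℝ → ℝ) (q : ℝ × ℝ × ℝ) : Prop :=
  pdx1 N q - pdx2 M q =
    -(Gamma1_22 g11 g12 g22 q) * L q + 2 * Gamma1_12 g11 g12 g22 q * M q
      - Gamma1_11 g11 g12 g22 q * N q ∧
  pdx1 M q - pdx2 L q =
    Gamma2_22 g11 g12 g22 q * L q - 2 * Gamma2_12 g11 g12 g22 q * M q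
      + Gamma2_11 g11 g12 g22 q * N q ∧
  L q * N q - (M q) ^ 2 = brioschi g11 g12 g22 q

/-!
Since `M < 0`, the definitions of `U` and `V` give `UV = -M` and `V² - U² = L - N`, so that
`L = V² + p`, `M = -UV`, `N = U² + p` with `p = L - V²`. Substituting these into the first two
Gauss–Codazzi equations and using the evolution equations for `U` and `V` yields the two momentum
equations. For incompressibility, symmetry of second derivatives and the evolution equations show
that `∂ₜ(∂₁U + ∂₂V)` is the constraint `∂₁(Γ¹₂₂L - 2Γ¹₁₂M + Γ¹₁₁N) + ∂₂(Γ²₂₂L - 2Γ²₁₂M + Γ²₁₁N)`,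
which vanishes; so the divergence keeps its initial value `0`.
-/

open Filter Set Topology

theorem abs_lt_sqrt_sq_add_four_mul_sq (a : ℝ) {m : ℝ} (hm : m ≠ 0) :
    |a| < √(a ^ 2 + 4 * m ^ 2) := by
  rw [Real.lt_sqrt (abs_nonneg a), sq_abs]
  exact lt_add_of_pos_right _ (by positivity)

theorem sqrt_half_mul_sqrt_half (a m : ℝ) :
    √(1 / 2 * (-a + √(a ^ 2 + 4 * m ^ 2))) * √(1 / 2 * (a + √(a ^ 2 + 4 * m ^ 2))) = |m| := by
  have hS := Real.abs_le_sqrt (show a ^ 2 ≤ a ^ 2 + 4 * m ^ 2 by nlinarith [sq_nonneg m])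
  have hS2 := Real.sq_sqrt (show 0 ≤ a ^ 2 + 4 * m ^ 2 by positivity)
  rw [← Real.sqrt_mul (by linarith [le_abs_self a]), ← Real.sqrt_sq_eq_abs]
  congr 1
  linear_combination (1 / 4 : ℝ) * hS2

theorem sq_sqrt_half_sub_sq_sqrt_half (a m : ℝ) :
    √(1 / 2 * (a + √(a ^ 2 + 4 * m ^ 2))) ^ 2 - √(1 / 2 * (-a + √(a ^ 2 + 4 * m ^ 2))) ^ 2
      = a := by
  have hS := Real.abs_le_sqrt (show a ^ 2 ≤ a ^ 2 + 4 * m ^ 2 by nlinarith [sq_nonneg m])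
  rw [Real.sq_sqrt (by linarith [neg_abs_le a]), Real.sq_sqrt (by linarith [le_abs_self a])]
  ring

theorem ContDiffWithinAt.sqrt_half_add_sqrt {E : Type*} [NormedAddCommGroup E]
    [NormedSpace ℝ E] {n : WithTop ℕ∞} {a m : E → ℝ} {s : Set E} {x : E}
    (ha : ContDiffWithinAt ℝ n a s x) (hm : ContDiffWithinAt ℝ n m s x) (hmx : m x ≠ 0) :
    ContDiffWithinAt ℝ n (fun y => √(1 / 2 * (a y + √(a y ^ 2 + 4 * m y ^ 2)))) s x := by
  have hS := abs_lt_sqrt_sq_add_four_mul_sq (a x) hmx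
  have hS0 : 0 < √(a x ^ 2 + 4 * m x ^ 2) := (abs_nonneg _).trans_lt hS
  refine (contDiffWithinAt_const.mul (ha.add (((ha.pow 2).add
    (contDiffWithinAt_const.mul (hm.pow 2))).sqrt (Real.sqrt_pos.1 hS0).ne'))).sqrt ?_
  linarith [neg_abs_le (a x)]

section LineDeriv

variable {E F : Type*} [NormedAddCommGroup E] [NormedSpace ℝ E] [NormedAddCommGroup F]
  [NormedSpace ℝ F]

theorem lineDeriv_congr_of_eqOn {f g : E → F} {s : Set E} {x v : E}
    (hs : ∀ᶠ t : ℝ in 𝓝 0, x + t • v ∈ s) (h : EqOn f g s) :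
    lineDeriv ℝ f x v = lineDeriv ℝ g x v :=
  Filter.EventuallyEq.deriv_eq (hs.mono fun _ ht => h ht)

theorem ContDiffOn.continuousOn_lineDeriv {f : E → F} {s : Set E} {v : E}
    (hf : ContDiffOn ℝ 1 f s) (hs : UniqueDiffOn ℝ s)
    (hv : ∀ x ∈ s, ∀ᶠ t : ℝ in 𝓝 0, x + t • v ∈ s) :
    ContinuousOn (fun x => lineDeriv ℝ f x v) s := by
  refine ((hf.continuousOn_fderivWithin hs le_rfl).clm_apply (continuousOn_const (c := v))).congr
    fun x hx => ?_
  exact (((hf.differentiableOn one_ne_zero x hx).hasFDerivWithinAt.hasLineDerivWithinAt v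
    ).hasLineDerivAt' (hv x hx)).lineDeriv

-- Symmetry of second derivatives: `∂_w ∂_v W = ∂_v ∂_w W`.
theorem ContDiffAt.hasDerivAt_lineDeriv_comp {W : E → F} {r v w : E} {γ : ℝ → E} {t₀ : ℝ}
    (hW : ContDiffAt ℝ 2 W r) (hγ : HasDerivAt γ w t₀) (hγt₀ : γ t₀ = r) :
    HasDerivAt (fun t => lineDeriv ℝ W (γ t) v)
      (lineDeriv ℝ (fun x => lineDeriv ℝ W x w) r v) t₀ := by
  subst hγt₀
  have hlin : ∀ u, (fun x => lineDeriv ℝ W x u) =ᶠ[𝓝 (γ t₀)] fun x => fderiv ℝ W x u :=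
    fun u => (hW.eventually (by simp)).mono fun x hx =>
      (hx.differentiableAt (by simp)).lineDeriv_eq_fderiv
  have hW2 : HasFDerivAt (fderiv ℝ W) (fderiv ℝ (fderiv ℝ W) (γ t₀)) (γ t₀) :=
    ((hW.fderiv_right (m := 1) le_rfl).differentiableAt one_ne_zero).hasFDerivAt
  have hsymm := hW.isSymmSndFDerivAt (by simp) w v
  rw [(hlin w).lineDeriv_eq, ((hW2.clm_apply (hasFDerivAt_const w _)).hasLineDerivAt v).lineDeriv]
  have := (hW2.comp_hasDerivAt t₀ hγ).clm_apply (hasDerivAt_const t₀ v)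
  simp only [zero_apply, map_zero, zero_add, add_zero, add_apply,
    ContinuousLinearMap.comp_apply, ContinuousLinearMap.flip_apply, hsymm] at this ⊢
  exact this.congr_of_eventuallyEq (hγ.continuousAt.eventually (hlin v))

end LineDeriv

theorem eq_of_hasDerivAt_zero {f : ℝ → ℝ} {a b : ℝ} (hab : a ≤ b)
    (hf : ContinuousOn f (Icc a b)) (hf' : ∀ x ∈ Ioo a b, HasDerivAt f 0 x) : f b = f a := by
  rcases hab.eq_or_lt with rfl | hab
  · rfl
  obtain ⟨c, -, hc⟩ := exists_hasDerivAt_eq_slope f (fun _ => 0) hab hf hf'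
  rw [eq_comm, div_eq_zero_iff, sub_eq_zero] at hc
  exact hc.resolve_right (sub_ne_zero.2 hab.ne')

theorem pdx1_eq_lineDeriv (f : ℝ × ℝ × ℝ → ℝ) :
    pdx1 f = fun q => lineDeriv ℝ f q (1, 0, 0) := by
  ext ⟨x, y, t⟩
  simpa [pdx1, lineDeriv] using (deriv_comp_const_add (fun x' => f (x', y, t)) x 0).symm

theorem pdx2_eq_lineDeriv (f : ℝ × ℝ × ℝ → ℝ) :
    pdx2 f = fun q => lineDeriv ℝ f q (0, 1, 0) := by
  ext ⟨x, y, t⟩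
  simpa [pdx2, lineDeriv] using (deriv_comp_const_add (fun y' => f (x, y', t)) y 0).symm

theorem pdt_eq_lineDeriv (f : ℝ × ℝ × ℝ → ℝ) :
    pdt f = fun q => lineDeriv ℝ f q (0, 0, 1) := by
  ext ⟨x, y, t⟩
  simpa [pdt, lineDeriv] using (deriv_comp_const_add (fun t' => f (x, y, t')) t 0).symm

theorem pdx1_neg (f : ℝ × ℝ × ℝ → ℝ) (q : ℝ × ℝ × ℝ) : pdx1 (fun r => -f r) q = -pdx1 f q :=
  deriv.neg

theorem pdx2_neg (f : ℝ × ℝ × ℝ → ℝ) (q : ℝ × ℝ × ℝ) : pdx2 (fun r => -f r) q = -pdx2 f q :=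
  deriv.neg

def cylinder (Ω : Set (ℝ × ℝ)) (I : Set ℝ) : Set (ℝ × ℝ × ℝ) :=
  {q | (q.1, q.2.1) ∈ Ω ∧ q.2.2 ∈ I}

section Cylinder

variable {Ω : Set (ℝ × ℝ)} {I : Set ℝ}

theorem cylinder_mono {J : Set ℝ} (h : I ⊆ J) : cylinder Ω I ⊆ cylinder Ω J :=
  fun _ hq => ⟨hq.1, h hq.2⟩

theorem isOpen_cylinder (hΩ : IsOpen Ω) (hI : IsOpen I) : IsOpen (cylinder Ω I) :=
  (hΩ.preimage (by fun_prop)).inter (hI.preimage (by fun_prop))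

theorem uniqueDiffOn_cylinder (hΩ : IsOpen Ω) (hI : UniqueDiffOn ℝ I) :
    UniqueDiffOn ℝ (cylinder Ω I) :=
  (ContinuousLinearEquiv.prodAssoc ℝ ℝ ℝ ℝ).symm.uniqueDiffOn_preimage_iff.2
    (hΩ.uniqueDiffOn.prod hI)

theorem eventually_add_smul_mem_cylinder (hΩ : IsOpen Ω) {q v : ℝ × ℝ × ℝ}
    (hq : q ∈ cylinder Ω I) (hv : v.2.2 = 0) :
    ∀ᶠ t : ℝ in 𝓝 0, q + t • v ∈ cylinder Ω I := by
  have hline : ContinuousAt (fun t : ℝ => (q.1 + t * v.1, q.2.1 + t * v.2.1)) 0 := by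
    fun_prop
  filter_upwards [hline.preimage_mem_nhds (by simpa using hΩ.mem_nhds hq.1)] with t ht
  exact ⟨ht, by simpa [hv] using hq.2⟩

theorem pdx1_congr_cylinder (hΩ : IsOpen Ω) {f g : ℝ × ℝ × ℝ → ℝ} {q : ℝ × ℝ × ℝ}
    (h : EqOn f g (cylinder Ω I)) (hq : q ∈ cylinder Ω I) : pdx1 f q = pdx1 g q := by
  simp only [pdx1_eq_lineDeriv]
  exact lineDeriv_congr_of_eqOn (eventually_add_smul_mem_cylinder hΩ hq rfl) h

theorem pdx2_congr_cylinder (hΩ : IsOpen Ω) {f g : ℝ × ℝ × ℝ → ℝ} {q : ℝ × ℝ × ℝ}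
    (h : EqOn f g (cylinder Ω I)) (hq : q ∈ cylinder Ω I) : pdx2 f q = pdx2 g q := by
  simp only [pdx2_eq_lineDeriv]
  exact lineDeriv_congr_of_eqOn (eventually_add_smul_mem_cylinder hΩ hq rfl) h

theorem continuousOn_lineDeriv_cylinder (hΩ : IsOpen Ω) (hI : UniqueDiffOn ℝ I)
    {f : ℝ × ℝ × ℝ → ℝ} (hf : ContDiffOn ℝ 1 f (cylinder Ω I)) {x y : ℝ} (hxy : (x, y) ∈ Ω)
    {v : ℝ × ℝ × ℝ} (hv : v.2.2 = 0) :
    ContinuousOn (fun t => lineDeriv ℝ f (x, y, t) v) I :=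
  (hf.continuousOn_lineDeriv (uniqueDiffOn_cylinder hΩ hI)
    fun _ hq => eventually_add_smul_mem_cylinder hΩ hq hv).comp (by fun_prop) fun _ ht => ⟨hxy, ht⟩

theorem pdx1_add_pdx2_eq_zero_of_initial {T : ℝ} (hΩ : IsOpen Ω) {U V : ℝ × ℝ × ℝ → ℝ}
    (hU : ContDiffOn ℝ 2 U (cylinder Ω (Ico 0 T))) (hV : ContDiffOn ℝ 2 V (cylinder Ω (Ico 0 T)))
    (hdiv : ∀ q ∈ cylinder Ω (Ioo 0 T), pdx1 (pdt U) q + pdx2 (pdt V) q = 0)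
    (hinit : ∀ q ∈ cylinder Ω (Ico 0 T), q.2.2 = 0 → pdx1 U q + pdx2 V q = 0) :
    ∀ q ∈ cylinder Ω (Ico 0 T), pdx1 U q + pdx2 V q = 0 := by
  simp only [pdx1_eq_lineDeriv, pdx2_eq_lineDeriv, pdt_eq_lineDeriv] at hdiv hinit ⊢
  rintro ⟨x, y, t⟩ ⟨hxy, ht0, htT⟩
  set φ : ℝ → ℝ := fun s => lineDeriv ℝ U (x, y, s) (1, 0, 0) + lineDeriv ℝ V (x, y, s) (0, 1, 0)
  have hcont : ContinuousOn φ (Icc 0 t) :=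
    ((continuousOn_lineDeriv_cylinder hΩ (uniqueDiffOn_Ico 0 T) (hU.of_le one_le_two) hxy rfl).add
      (continuousOn_lineDeriv_cylinder hΩ (uniqueDiffOn_Ico 0 T) (hV.of_le one_le_two) hxy rfl)
      ).mono (Icc_subset_Ico_right htT)
  have hderiv : ∀ s ∈ Ioo 0 t, HasDerivAt φ 0 s := by
    intro s hs
    have hsD : (x, y, s) ∈ cylinder Ω (Ioo 0 T) := ⟨hxy, hs.1, hs.2.trans htT⟩
    have hnhds : cylinder Ω (Ico 0 T) ∈ 𝓝 (x, y, s) :=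
      mem_of_superset ((isOpen_cylinder hΩ isOpen_Ioo).mem_nhds hsD)
        (cylinder_mono Ioo_subset_Ico_self)
    have htime : HasDerivAt (fun s : ℝ => ((x, y, s) : ℝ × ℝ × ℝ)) (0, 0, 1) s :=
      (hasDerivAt_const s x).prodMk ((hasDerivAt_const s y).prodMk (hasDerivAt_id s))
    simpa only [hdiv _ hsD] using
      ((hU.contDiffAt hnhds).hasDerivAt_lineDeriv_comp (v := (1, 0, 0)) htime rfl).fun_add
        ((hV.contDiffAt hnhds).hasDerivAt_lineDeriv_comp (v := (0, 1, 0)) htime rfl)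
  exact (eq_of_hasDerivAt_zero ht0 hcont hderiv).trans
    (hinit (x, y, 0) ⟨hxy, le_rfl, ht0.trans_lt htT⟩ rfl)

end Cylinder

theorem statement2_general (Ω : Set (ℝ × ℝ)) (hΩ : IsOpen Ω) (T : ℝ)
    (L M N g11 g12 g22 : ℝ × ℝ × ℝ → ℝ)
    (D : Set (ℝ × ℝ × ℝ))
    (hD : D = {q : ℝ × ℝ × ℝ | (q.1, q.2.1) ∈ Ω ∧ q.2.2 ∈ Set.Ico 0 T})
    (hLreg : ContDiffOn ℝ 2 L D) (hMreg : ContDiffOn ℝ 2 M D) (hNreg : ContDiffOn ℝ 2 N D)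
    (hMneg : ∀ q ∈ D, M q < 0)
    (U V : ℝ × ℝ × ℝ → ℝ)
    (hU : U = fun q =>
      Real.sqrt ((1 / 2) * (-(L q - N q) + Real.sqrt ((L q - N q) ^ 2 + 4 * (M q) ^ 2))))
    (hV : V = fun q =>
      Real.sqrt ((1 / 2) * ((L q - N q) + Real.sqrt ((L q - N q) ^ 2 + 4 * (M q) ^ 2))))
    -- (a) the constraint equations at `t = 0`:
    (hinit_div : ∀ q ∈ D, q.2.2 = 0 → pdx1 U q + pdx2 V q = 0)
    -- (b) the system for all `t ∈ [0,T)`: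
    (hGC : ∀ q ∈ D, GaussCodazzi L M N g11 g12 g22 q)
    (hevolU : ∀ q ∈ D, pdt U q =
      Gamma1_22 g11 g12 g22 q * L q - 2 * Gamma1_12 g11 g12 g22 q * M q
        + Gamma1_11 g11 g12 g22 q * N q)
    (hevolV : ∀ q ∈ D, pdt V q =
      Gamma2_22 g11 g12 g22 q * L q - 2 * Gamma2_12 g11 g12 g22 q * M q
        + Gamma2_11 g11 g12 g22 q * N q)
    (hcons : ∀ q ∈ D,
      pdx1 (fun r => Gamma1_22 g11 g12 g22 r * L r - 2 * Gamma1_12 g11 g12 g22 r * M r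
        + Gamma1_11 g11 g12 g22 r * N r) q
      + pdx2 (fun r => Gamma2_22 g11 g12 g22 r * L r - 2 * Gamma2_12 g11 g12 g22 r * M r
        + Gamma2_11 g11 g12 g22 r * N r) q = 0) :
    ∀ q ∈ D,
      pdx1 (fun r => (U r) ^ 2 + (L r - (V r) ^ 2)) q + pdx2 (fun r => U r * V r) q
        = -(pdt U q) ∧
      pdx1 (fun r => U r * V r) q + pdx2 (fun r => (V r) ^ 2 + (L r - (V r) ^ 2)) q
        = -(pdt V q) ∧
      pdx1 U q + pdx2 V q = 0 ∧
      L q = (V q) ^ 2 + (L q - (V q) ^ 2) ∧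
      M q = -(U q * V q) ∧
      N q = (U q) ^ 2 + (L q - (V q) ^ 2) := by
  obtain rfl : D = cylinder Ω (Ico 0 T) := hD
  have hUV : ∀ q ∈ cylinder Ω (Ico 0 T), U q * V q = -M q := fun q hq => by
    rw [hU, hV, sqrt_half_mul_sqrt_half, abs_of_neg (hMneg q hq)]
  have hN : ∀ q ∈ cylinder Ω (Ico 0 T), N q = U q ^ 2 + (L q - V q ^ 2) := fun q _ => by
    have := sq_sqrt_half_sub_sq_sqrt_half (L q - N q) (M q)
    rw [hU, hV]
    linarith
  have hUreg : ContDiffOn ℝ 2 U (cylinder Ω (Ico 0 T)) := fun q hq => by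
    simpa only [hU, neg_sq] using ((hLreg q hq).sub (hNreg q hq)).neg.sqrt_half_add_sqrt
      (hMreg q hq) (hMneg q hq).ne
  have hVreg : ContDiffOn ℝ 2 V (cylinder Ω (Ico 0 T)) := fun q hq => by
    simpa only [hV] using ((hLreg q hq).sub (hNreg q hq)).sqrt_half_add_sqrt
      (hMreg q hq) (hMneg q hq).ne
  have hdivt : ∀ q ∈ cylinder Ω (Ioo 0 T), pdx1 (pdt U) q + pdx2 (pdt V) q = 0 := fun q hq => by
    have hq' := cylinder_mono Ioo_subset_Ico_self hq
    rw [pdx1_congr_cylinder hΩ hevolU hq', pdx2_congr_cylinder hΩ hevolV hq']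
    exact hcons q hq'
  intro q hq
  obtain ⟨hGC1, hGC2, -⟩ := hGC q hq
  refine ⟨?_, ?_, pdx1_add_pdx2_eq_zero_of_initial hΩ hUreg hVreg hdivt hinit_div q hq, by ring,
    by rw [hUV q hq, neg_neg], hN q hq⟩
  · rw [← pdx1_congr_cylinder hΩ hN hq, pdx2_congr_cylinder hΩ hUV hq, pdx2_neg, hevolU q hq]
    linarith
  · simp only [add_sub_cancel]
    rw [pdx1_congr_cylinder hΩ hUV hq, pdx1_neg, hevolV q hq]
    linarith

/-- Theorem 4.1: if `(L, M, N, g)` satisfies the constraint equations at `t = 0`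
and the geometric-flow system (Gauss–Codazzi, the evolution equations, and the
divergence-free closure) for all `t ∈ [0,T)`, then `u := U(L,M,N)`, `v := V(L,M,N)`
and `p := L − V²` solve the incompressible Euler equations, with
`L = v² + p`, `M = −uv`, `N = u² + p`. -/
theorem statement2 (Ω : Set (ℝ × ℝ)) (hΩ : IsOpen Ω) (T : ℝ) (hT : 0 < T)
    (L M N g11 g12 g22 : ℝ × ℝ × ℝ → ℝ)
    (D : Set (ℝ × ℝ × ℝ))
    (hD : D = {q : ℝ × ℝ × ℝ | (q.1, q.2.1) ∈ Ω ∧ q.2.2 ∈ Set.Ico 0 T})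
    (hLreg : ContDiffOn ℝ 2 L D) (hMreg : ContDiffOn ℝ 2 M D) (hNreg : ContDiffOn ℝ 2 N D)
    (hg11 : ContDiffOn ℝ 2 g11 D) (hg12 : ContDiffOn ℝ 2 g12 D) (hg22 : ContDiffOn ℝ 2 g22 D)
    (hdet : ∀ q ∈ D, 0 < detg g11 g12 g22 q)
    (hMneg : ∀ q ∈ D, M q < 0)
    (U V : ℝ × ℝ × ℝ → ℝ)
    (hU : U = fun q =>
      Real.sqrt ((1 / 2) * (-(L q - N q) + Real.sqrt ((L q - N q) ^ 2 + 4 * (M q) ^ 2))))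
    (hV : V = fun q =>
      Real.sqrt ((1 / 2) * ((L q - N q) + Real.sqrt ((L q - N q) ^ 2 + 4 * (M q) ^ 2))))
    -- (a) the constraint equations at `t = 0`:
    (hinit_div : ∀ q ∈ D, q.2.2 = 0 → pdx1 U q + pdx2 V q = 0)
    (hinit_cons : ∀ q ∈ D, q.2.2 = 0 →
      pdx1 (fun r => Gamma1_22 g11 g12 g22 r * L r - 2 * Gamma1_12 g11 g12 g22 r * M r
        + Gamma1_11 g11 g12 g22 r * N r) q
      + pdx2 (fun r => Gamma2_22 g11 g12 g22 r * L r - 2 * Gamma2_12 g11 g12 g22 r * M r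
        + Gamma2_11 g11 g12 g22 r * N r) q = 0)
    (hinit_GC : ∀ q ∈ D, q.2.2 = 0 → GaussCodazzi L M N g11 g12 g22 q)
    -- (b) the system for all `t ∈ [0,T)`:
    (hGC : ∀ q ∈ D, GaussCodazzi L M N g11 g12 g22 q)
    (hevolU : ∀ q ∈ D, pdt U q =
      Gamma1_22 g11 g12 g22 q * L q - 2 * Gamma1_12 g11 g12 g22 q * M q
        + Gamma1_11 g11 g12 g22 q * N q)
    (hevolV : ∀ q ∈ D, pdt V q =
      Gamma2_22 g11 g12 g22 q * L q - 2 * Gamma2_12 g11 g12 g22 q * M q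
        + Gamma2_11 g11 g12 g22 q * N q)
    (hcons : ∀ q ∈ D,
      pdx1 (fun r => Gamma1_22 g11 g12 g22 r * L r - 2 * Gamma1_12 g11 g12 g22 r * M r
        + Gamma1_11 g11 g12 g22 r * N r) q
      + pdx2 (fun r => Gamma2_22 g11 g12 g22 r * L r - 2 * Gamma2_12 g11 g12 g22 r * M r
        + Gamma2_11 g11 g12 g22 r * N r) q = 0) :
    ∀ q ∈ D,
      pdx1 (fun r => (U r) ^ 2 + (L r - (V r) ^ 2)) q + pdx2 (fun r => U r * V r) q
        = -(pdt U q) ∧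
      pdx1 (fun r => U r * V r) q + pdx2 (fun r => (V r) ^ 2 + (L r - (V r) ^ 2)) q
        = -(pdt V q) ∧
      pdx1 U q + pdx2 V q = 0 ∧
      L q = (V q) ^ 2 + (L q - (V q) ^ 2) ∧
      M q = -(U q * V q) ∧
      N q = (U q) ^ 2 + (L q - (V q) ^ 2) :=
  statement2_general Ω hΩ T L M N g11 g12 g22 D hD hLreg hMreg hNreg hMneg U V hU hV hinit_div hGC
    hevolU hevolV hcons
end

section
/- (Degeneracy of the symbol for shear flow data, §6) Let p and U be real numbers with p ≠ 0 and U + p ≠ 0. Then for all ξ₁, ξ₂ ∈ ℝ, det [[ ((U+p)/(4p))ξ₁² − (1/4)ξ₂² , −(1/4)ξ₁² + (p/(4(U+p)))ξ₂² ], [ −((U+p)/(2p))ξ₁² − (1/2)ξ₂² , (1/2)ξ₁² + (p/(2(U+p)))ξ₂² ]] = 0. That is, the symbol of the second-order differential operator for (g₁₁, g₂₂) arising from shear flow initial data (u, v) = (u(x₂), 0) (where U = u(x₂)²) vanishes identically, so the system is degenerate. -/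
/-- Degeneracy of the symbol for shear flow data (§6): the principal symbol of the
second-order system (6.3) for `(g₁₁, g₂₂)` arising from shear flow initial data
vanishes identically (here `U = u(x₂)²`). -/
theorem statement7 (p U : ℝ) (hp : p ≠ 0) (hUp : U + p ≠ 0) (ξ1 ξ2 : ℝ) :
    Matrix.det !![((U + p) / (4 * p)) * ξ1 ^ 2 - (1 / 4) * ξ2 ^ 2,
                  -(1 / 4) * ξ1 ^ 2 + (p / (4 * (U + p))) * ξ2 ^ 2;
                  -((U + p) / (2 * p)) * ξ1 ^ 2 - (1 / 2) * ξ2 ^ 2,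
                  (1 / 2) * ξ1 ^ 2 + (p / (2 * (U + p))) * ξ2 ^ 2] = 0 := by
  rw [Matrix.det_fin_two_of]
  field_simp
  ring
end
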